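/- Let G be a Tanner graph that has a nonempty stopping set, with s_min the minimum size of a nonempty stopping set of G, and let t ≥ 1 be an integer. If p ∈ Z_{≥0}^n is a nonzero bad pseudocodeword satisfying the fundamental cone inequalities of G with p_i ≤ t for all i, then w_maxfrac(p) ≥ s_min / t; consequently w_BSC(p) ≥ s_min/t and w_AWGN(p) ≥ s_min/t. -/

import Mathlib

/-- A Tanner graph with `n` variable nodes and `m` check nodes, given by the
neighborhood `N u` (the set of variable nodes adjacent to check node `u`). -/
structure TannerGraph (n m : ℕ) where
  N : Fin m → Finset (Fin n)

/-- A codeword of the binary code `C(G)`: every check node has an even number of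
neighbors assigned 1. -/
def IsCodeword {n m : ℕ} (G : TannerGraph n m) (c : Fin n → ZMod 2) : Prop :=
  ∀ j : Fin m, ∑ i ∈ G.N j, c i = 0

/-- A vector `p` is a bad pseudocodeword if some weight vector makes its cost
negative while all codewords (as 0/1 real vectors) have nonnegative cost. -/
def IsBad {n m : ℕ} (G : TannerGraph n m) (p : Fin n → ℝ) : Prop :=
  ∃ w : Fin n → ℝ, (∑ i, p i * w i) < 0 ∧
    ∀ c : Fin n → ZMod 2, IsCodeword G c → 0 ≤ ∑ i, ((c i).val : ℝ) * w i

/-- A stopping set: every check node adjacent to some node of `S` is adjacent to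
at least two nodes of `S`. -/
def IsStoppingSet {n m : ℕ} (G : TannerGraph n m) (S : Finset (Fin n)) : Prop :=
  ∀ j : Fin m, (G.N j ∩ S).Nonempty → 2 ≤ (G.N j ∩ S).card

/-- AWGN pseudocodeword weight. -/
noncomputable def wAWGN {n : ℕ} (p : Fin n → ℝ) : ℝ :=
  (∑ i, p i) ^ 2 / (∑ i, (p i) ^ 2)

/-- The sum of the `e` largest components of `p` (for nonnegative `p`). -/
noncomputable def maxSum {n : ℕ} (p : Fin n → ℝ) (e : ℕ) : ℝ :=
  sSup ((fun S : Finset (Fin n) => ∑ i ∈ S, p i) '' {S | S.card = e})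

/-- The smallest number `e` such that the sum of the `e` largest components of `p`
is at least half of the total sum. -/
noncomputable def eBSC {n : ℕ} (p : Fin n → ℝ) : ℕ :=
  sInf {e : ℕ | (∑ i, p i) / 2 ≤ maxSum p e}

/-- BSC pseudocodeword weight. -/
noncomputable def wBSC {n : ℕ} (p : Fin n → ℝ) : ℝ :=
  if maxSum p (eBSC p) = (∑ i, p i) / 2 then 2 * (eBSC p : ℝ) else 2 * (eBSC p : ℝ) - 1

/-- Max-fractional weight: total sum divided by the largest component. -/
noncomputable def wMaxFrac {n : ℕ} (p : Fin n → ℝ) : ℝ :=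
  (∑ i, p i) / sSup (Set.range p)

/-!
The support of a nonzero vector `p` of the fundamental cone is a stopping set: a check node
seeing one positive coordinate needs a second one to balance it. Hence `s_min ≤ |supp p| ≤ Σ pᵢ`
for integral `p`, and since `max pᵢ ≤ t` the max-fractional weight is at least `Σ pᵢ / t`; the
AWGN weight dominates the max-fractional one because `Σ pᵢ² ≤ (max pᵢ) Σ pᵢ`. For the BSC weight
take `e` coordinates `S` carrying at least half of the integral mass: the support outside `S` is
bounded by the mass outside `S`, which gives `|supp p| ≤ 2et`, and `|supp p| ≤ (2e - 1)t` when `S`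
carries strictly more than half.
-/

open Finset

def IsInFundamentalCone {n m : ℕ} (G : TannerGraph n m) (p : Fin n → ℝ) : Prop :=
  (∀ i, 0 ≤ p i) ∧ ∀ j : Fin m, ∀ i ∈ G.N j, p i ≤ ∑ k ∈ (G.N j).erase i, p k

theorem isStoppingSet_support {n m : ℕ} {G : TannerGraph n m} {p : Fin n → ℝ}
    (hp : IsInFundamentalCone G p) : IsStoppingSet G {i | p i ≠ 0} := by
  rintro j ⟨i, hi⟩
  obtain ⟨hiN, hip⟩ := mem_inter.mp hi
  have hpos : 0 < p i := (hp.1 i).lt_of_ne' (mem_filter.mp hip).2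
  have hrest : ∑ k ∈ (G.N j).erase i, p k ≠ 0 := ((hp.2 j i hiN).trans_lt' hpos).ne'
  obtain ⟨k, hk, hkp⟩ := exists_ne_zero_of_sum_ne_zero hrest
  exact one_lt_card.mpr ⟨i, hi, k, mem_inter.mpr ⟨mem_of_mem_erase hk, by simpa using hkp⟩,
    (ne_of_mem_erase hk).symm⟩

theorem card_filter_ne_zero_le_sum {ι : Type*} (s : Finset ι) (p : ι → ℕ) :
    #{i ∈ s | p i ≠ 0} ≤ ∑ i ∈ s, p i := by
  rw [← sum_filter_ne_zero, card_eq_sum_ones]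
  exact sum_le_sum fun i hi => Nat.one_le_iff_ne_zero.mpr (mem_filter.mp hi).2

section Weights

variable {n : ℕ} {p : Fin n → ℝ}

theorem apply_le_sSup_range (i : Fin n) : p i ≤ sSup (Set.range p) :=
  le_csSup (Set.finite_range p).bddAbove ⟨i, rfl⟩

theorem sum_div_le_wMaxFrac {t : ℝ} (hp : ∀ i, 0 ≤ p i) (hpt : ∀ i, p i ≤ t) :
    (∑ i, p i) / t ≤ wMaxFrac p := by
  unfold wMaxFrac
  rcases (sum_nonneg fun i _ => hp i).eq_or_lt with hsum | hsum
  · rw [← hsum, zero_div, zero_div]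
  obtain ⟨i, -, hi⟩ := exists_lt_of_sum_lt (f := fun _ => (0 : ℝ)) (by simpa using hsum)
  have hM : 0 < sSup (Set.range p) := hi.trans_le (apply_le_sSup_range i)
  exact div_le_div_of_nonneg_left hsum.le hM
    (csSup_le ⟨p i, i, rfl⟩ (Set.forall_mem_range.mpr hpt))

theorem wMaxFrac_le_wAWGN (hp : ∀ i, 0 ≤ p i) : wMaxFrac p ≤ wAWGN p := by
  unfold wMaxFrac wAWGN
  set M := sSup (Set.range p)
  have hsq : ∑ i, p i ^ 2 ≤ M * ∑ i, p i := by
    rw [mul_sum]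
    refine sum_le_sum fun i _ => ?_
    rw [sq]
    exact mul_le_mul_of_nonneg_right (apply_le_sSup_range i) (hp i)
  rcases (sum_nonneg fun i _ => sq_nonneg (p i)).eq_or_lt with hsq0 | hsq0
  · have hzero : ∀ i, p i = 0 := by
      simpa using (sum_eq_zero_iff_of_nonneg (s := univ) fun i _ => sq_nonneg (p i)).mp hsq0.symm
    simp [hzero]
  have hsum : 0 ≤ ∑ i, p i := sum_nonneg fun i _ => hp i
  have hM : 0 < M := pos_of_mul_pos_left (hsq0.trans_le hsq) hsum
  rw [div_le_div_iff₀ hM hsq0]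
  nlinarith

end Weights

section MaxSum

variable {n : ℕ} (p : Fin n → ℝ)

theorem sum_le_maxSum (S : Finset (Fin n)) : ∑ i ∈ S, p i ≤ maxSum p #S :=
  le_csSup ((Set.toFinite _).image _).bddAbove ⟨S, rfl, rfl⟩

theorem exists_sum_eq_maxSum {e : ℕ} (he : e ≤ n) :
    ∃ S : Finset (Fin n), #S = e ∧ ∑ i ∈ S, p i = maxSum p e := by
  obtain ⟨T, -, hT⟩ := exists_subset_card_eq (s := (univ : Finset (Fin n))) (by simpa using he)
  exact (Set.Nonempty.csSup_mem ⟨_, T, hT, rfl⟩ ((Set.toFinite _).image _) :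
    maxSum p e ∈ _)

variable {p}

theorem half_sum_le_maxSum_card (hp : 0 ≤ ∑ i, p i) : (∑ i, p i) / 2 ≤ maxSum p n := by
  simpa using (half_le_self hp).trans (sum_le_maxSum p univ)

theorem half_sum_le_maxSum_eBSC (hp : 0 ≤ ∑ i, p i) : (∑ i, p i) / 2 ≤ maxSum p (eBSC p) :=
  Nat.sInf_mem (s := {e | (∑ i, p i) / 2 ≤ maxSum p e}) ⟨n, half_sum_le_maxSum_card hp⟩

theorem eBSC_le (hp : 0 ≤ ∑ i, p i) : eBSC p ≤ n :=
  Nat.sInf_le (half_sum_le_maxSum_card hp)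

end MaxSum

theorem card_support_le_add_sum_compl {n : ℕ} (p : Fin n → ℕ) (S : Finset (Fin n)) :
    #{i | p i ≠ 0} ≤ #S + ∑ i ∈ Sᶜ, p i := by
  calc #{i | p i ≠ 0} ≤ #(S ∪ {i ∈ Sᶜ | p i ≠ 0}) := card_le_card fun i hi => by
        by_cases hS : i ∈ S <;> simp_all
    _ ≤ #S + #{i ∈ Sᶜ | p i ≠ 0} := card_union_le _ _
    _ ≤ #S + ∑ i ∈ Sᶜ, p i := by grw [card_filter_ne_zero_le_sum]

theorem card_support_div_le_wBSC {n : ℕ} (p : Fin n → ℕ) (t : ℕ) (hpt : ∀ i, p i ≤ t) :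
    (#{i | p i ≠ 0} : ℝ) / t ≤ wBSC (fun i => (p i : ℝ)) := by
  set P : Fin n → ℝ := fun i => (p i : ℝ)
  have hP : ∑ i, P i = (∑ i, p i : ℕ) := by push_cast; rfl
  have hP0 : 0 ≤ ∑ i, P i := hP ▸ Nat.cast_nonneg _
  have hhalf := half_sum_le_maxSum_eBSC hP0
  obtain ⟨S, hSe, hSmax⟩ := exists_sum_eq_maxSum P (eBSC_le hP0)
  set e := eBSC P
  have hS : maxSum P e = (∑ i ∈ S, p i : ℕ) := by rw [← hSmax]; push_cast; rfl
  have hsplit : ∑ i ∈ S, p i + ∑ i ∈ Sᶜ, p i = ∑ i, p i := sum_add_sum_compl S p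
  have hSt : ∑ i ∈ S, p i ≤ e * t := by
    simpa [hSe] using sum_le_card_nsmul S p t fun i _ => hpt i
  have hcard := card_support_le_add_sum_compl p S
  rw [hSe] at hcard
  have ht : (0 : ℝ) ≤ t := t.cast_nonneg
  unfold wBSC
  rw [hS, hP] at hhalf ⊢
  split_ifs with heq
  · have h2 : ∑ i, p i = 2 * ∑ i ∈ S, p i := by
      exact_mod_cast (by linarith : ((∑ i, p i : ℕ) : ℝ) = 2 * (∑ i ∈ S, p i : ℕ))
    have hle : #{i | p i ≠ 0} ≤ 2 * (e * t) := by
      have := card_filter_ne_zero_le_sum univ p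
      omega
    have hle' : (#{i | p i ≠ 0} : ℝ) ≤ 2 * (e * t) := by exact_mod_cast hle
    exact div_le_of_le_mul₀ ht (by positivity) (by linarith)
  · -- by integrality the mass outside `S` is less than the mass on `S`, hence at most `e t - 1`
    have hlt : ∑ i, p i < 2 * ∑ i ∈ S, p i := by
      have := lt_of_le_of_ne hhalf (Ne.symm heq)
      exact_mod_cast (by linarith : ((∑ i, p i : ℕ) : ℝ) < 2 * (∑ i ∈ S, p i : ℕ))
    obtain ⟨he, ht1⟩ : 0 < e ∧ 0 < t := CanonicallyOrderedAdd.mul_pos.mp (by omega)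
    have hprod : e + t ≤ e * t + 1 := by nlinarith
    have hkey : #{i | p i ≠ 0} + t ≤ 2 * (e * t) := by omega
    have hkey' : (#{i | p i ≠ 0} : ℝ) + t ≤ 2 * (e * t) := by exact_mod_cast hkey
    have he' : (1 : ℝ) ≤ e := by exact_mod_cast he
    exact div_le_of_le_mul₀ ht (by linarith) (by linarith)

theorem bad_pscw_weight_ge_smin_div_t_general {n m : ℕ} (G : TannerGraph n m) (smin t : ℕ)
    (hsmin : IsLeast {k : ℕ | ∃ S : Finset (Fin n),
      S.Nonempty ∧ IsStoppingSet G S ∧ S.card = k} smin)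
    (p : Fin n → ℕ) (hpne : p ≠ 0) (hpt : ∀ i, p i ≤ t)
    (hcone : ∀ j : Fin m, ∀ i ∈ G.N j,
      ((p i : ℝ)) ≤ ∑ k ∈ (G.N j).erase i, (p k : ℝ)) :
    (smin : ℝ) / (t : ℝ) ≤ wMaxFrac (fun i => (p i : ℝ)) ∧
    (smin : ℝ) / (t : ℝ) ≤ wBSC (fun i => (p i : ℝ)) ∧
    (smin : ℝ) / (t : ℝ) ≤ wAWGN (fun i => (p i : ℝ)) := by
  have hstop : IsStoppingSet G {i | p i ≠ 0} := by
    simpa using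
      isStoppingSet_support (p := fun i => (p i : ℝ)) ⟨fun i => (p i).cast_nonneg, hcone⟩
  have hsupp : ({i | p i ≠ 0} : Finset (Fin n)).Nonempty := by
    simpa [filter_nonempty_iff] using Function.ne_iff.mp hpne
  have hsmin_le : (smin : ℝ) / t ≤ (#{i | p i ≠ 0} : ℝ) / t := by
    gcongr
    exact_mod_cast hsmin.2 ⟨_, hsupp, hstop, rfl⟩
  have hsum : (#{i | p i ≠ 0} : ℝ) / t ≤ (∑ i, (p i : ℝ)) / t := by
    gcongr
    exact_mod_cast card_filter_ne_zero_le_sum univ p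
  have hmaxfrac := (hsmin_le.trans hsum).trans
    (sum_div_le_wMaxFrac (fun i => (p i).cast_nonneg) fun i => by exact_mod_cast hpt i)
  exact ⟨hmaxfrac, hsmin_le.trans (card_support_div_le_wBSC p t hpt),
    hmaxfrac.trans (wMaxFrac_le_wAWGN fun i => (p i).cast_nonneg)⟩

theorem bad_pscw_weight_ge_smin_div_t {n m : ℕ} (G : TannerGraph n m) (smin t : ℕ)
    (hsmin : IsLeast {k : ℕ | ∃ S : Finset (Fin n),
      S.Nonempty ∧ IsStoppingSet G S ∧ S.card = k} smin)
    (ht : 1 ≤ t)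
    (p : Fin n → ℕ) (hpne : p ≠ 0) (hpt : ∀ i, p i ≤ t)
    (hcone : ∀ j : Fin m, ∀ i ∈ G.N j,
      ((p i : ℝ)) ≤ ∑ k ∈ (G.N j).erase i, (p k : ℝ))
    (hbad : IsBad G (fun i => (p i : ℝ))) :
    (smin : ℝ) / (t : ℝ) ≤ wMaxFrac (fun i => (p i : ℝ)) ∧
    (smin : ℝ) / (t : ℝ) ≤ wBSC (fun i => (p i : ℝ)) ∧
    (smin : ℝ) / (t : ℝ) ≤ wAWGN (fun i => (p i : ℝ)) :=
  bad_pscw_weight_ge_smin_div_t_general G smin t hsmin p hpne hpt hcone
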